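/- Let ρ be a real number with √3/2 < ρ ≤ 1 and let W = {(1/4, ρ/2), (3/4, ρ/2)} ⊆ Q. Then there exists a point p ∈ Q such that μ({q ∈ Q : dist(q, p) < infDist(q, W)}) > ρ/4. (For aspect ratio greater than √3/2, Barney's first point steals strictly more than a quarter of the board from the 1×2 grid.) -/

import Mathlib

open MeasureTheory Metric Set
open scoped ENNReal

/-- The point `(x, y)` in the Euclidean plane. -/
noncomputable def pt (x y : ℝ) : EuclideanSpace ℝ (Fin 2) :=
  (WithLp.equiv 2 (Fin 2 → ℝ)).symm ![x, y]

/-- The rectangular board `[0,1] × [0,ρ]`. -/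
def board (ρ : ℝ) : Set (EuclideanSpace ℝ (Fin 2)) :=
  {q | q 0 ∈ Set.Icc (0:ℝ) 1 ∧ q 1 ∈ Set.Icc (0:ℝ) ρ}

/-!
Barney puts his point at `p = w₁ + b • (c, -1)`, slightly below and to the right of
`w₁ = (1/4, ρ/2)`. The points closer to `p` than to both `w₁` and `w₂ = (3/4, ρ/2)` lie below the
two perpendicular bisectors, which cross above `x = 1/2` at some height `h`. Below them lie a
trapezoid over `[0, 1/2]` of area `(ρ - (1 + c²) b) / 4` and a triangle over `[1/2, 1/2 + h/K]` of
area `h² / (2K)`, where `-K` is the slope of the second bisector. So Barney gains on `ρ/4` as soon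
as `(1 + c²) b K < 2 h²`; as `b → 0` this reads `(2ρ + c)² > 4 (1 + c²)`, and the optimal slope
`c = 2ρ/3` turns it into `4ρ² > 3`.
-/

theorem pt_apply_zero (x y : ℝ) : pt x y 0 = x := rfl

theorem pt_apply_one (x y : ℝ) : pt x y 1 = y := rfl

theorem pt_mem_board {ρ x y : ℝ} : pt x y ∈ board ρ ↔ x ∈ Icc 0 1 ∧ y ∈ Icc 0 ρ := Iff.rfl

theorem Metric.infDist_pair {E : Type*} [PseudoMetricSpace E] (x y z : E) :
    infDist x {y, z} = min (dist x y) (dist x z) := by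
  rw [← singleton_union, infDist, infEDist_union, infEDist_singleton,
    infEDist_singleton, ENNReal.toReal_min (edist_ne_top _ _) (edist_ne_top _ _),
    ← dist_edist, ← dist_edist]

def planeCoords (q : EuclideanSpace ℝ (Fin 2)) : ℝ × ℝ := (q 0, q 1)

theorem measurePreserving_planeCoords : MeasurePreserving planeCoords :=
  (volume_preserving_finTwoArrow ℝ).comp (PiLp.volume_preserving_ofLp (Fin 2))

theorem dist_lt_dist_iff_sq (q p w : EuclideanSpace ℝ (Fin 2)) :
    dist q p < dist q w ↔ (q 0 - p 0) ^ 2 + (q 1 - p 1) ^ 2 < (q 0 - w 0) ^ 2 + (q 1 - w 1) ^ 2 := by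
  simp only [EuclideanSpace.dist_eq, Fin.sum_univ_two, Real.dist_eq, sq_abs]
  exact Real.sqrt_lt_sqrt_iff (by positivity)

theorem volume_regionBetween_zero_of_affine {f : ℝ → ℝ} {u v : ℝ} (m k : ℝ)
    (hf : ∀ x, f x = m * x + k) (huv : u ≤ v) (hu : 0 ≤ f u) (hv : 0 ≤ f v) :
    volume (regionBetween (fun _ => 0) f (Ioo u v)) =
      ENNReal.ofReal ((v - u) * (f u + f v) / 2) := by
  obtain rfl : f = fun x => m * x + k := funext hf
  have hnonneg : ∀ x ∈ Ioo u v, (0 : ℝ) ≤ m * x + k := fun x hx => by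
    rcases le_total 0 m with hm | hm <;> nlinarith [hx.1, hx.2]
  rw [Measure.volume_eq_prod, volume_regionBetween_eq_integral integrableOn_zero
    ((by fun_prop : Continuous fun x => m * x + k).integrableOn_Icc.mono_set Ioo_subset_Icc_self)
    measurableSet_Ioo hnonneg,
    ← integral_Ioc_eq_integral_Ioo, ← intervalIntegral.integral_of_le huv]
  simp only [Pi.sub_apply, sub_zero]
  rw [intervalIntegral.integral_add ((continuous_const_mul m).intervalIntegrable u v)
    intervalIntegrable_const, intervalIntegral.integral_const_mul, integral_id,
    intervalIntegral.integral_const, smul_eq_mul]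
  ring_nf

section BarneyPoint

variable (ρ c b : ℝ)

noncomputable def barneyPoint : EuclideanSpace ℝ (Fin 2) := pt (1 / 4 + c * b) (ρ / 2 - b)

/- The perpendicular bisectors of `barneyPoint ρ c b` with `(1/4, ρ/2)` and with `(3/4, ρ/2)`,
as graphs over the `x`-axis; they cross above `x = 1/2`. -/
noncomputable def leftBisector (x : ℝ) : ℝ := ρ / 2 + c * (x - 1 / 4) - (1 + c ^ 2) * b / 2

noncomputable def rightSlope : ℝ := (1 - 2 * c * b) / (2 * b)

noncomputable def rightBisector (x : ℝ) : ℝ :=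
  leftBisector ρ c b (1 / 2) - rightSlope c b * (x - 1 / 2)

noncomputable def rightEnd : ℝ := 1 / 2 + leftBisector ρ c b (1 / 2) / rightSlope c b

noncomputable def stolenRegion : Set (ℝ × ℝ) :=
  regionBetween (fun _ => 0) (leftBisector ρ c b) (Ioo 0 (1 / 2)) ∪
    regionBetween (fun _ => 0) (rightBisector ρ c b) (Ioo (1 / 2) (rightEnd ρ c b))

noncomputable def stolenArea : ℝ :=
  (ρ - (1 + c ^ 2) * b) / 4 + leftBisector ρ c b (1 / 2) ^ 2 / (2 * rightSlope c b)

variable {ρ c b}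

theorem measurableSet_stolenRegion : MeasurableSet (stolenRegion ρ c b) :=
  (measurableSet_regionBetween measurable_const (by unfold leftBisector; fun_prop)
      measurableSet_Ioo).union
    (measurableSet_regionBetween measurable_const (by unfold rightBisector; fun_prop)
      measurableSet_Ioo)

theorem dist_barneyPoint_lt_left_iff (hb : 0 < b) (q : EuclideanSpace ℝ (Fin 2)) :
    dist q (barneyPoint ρ c b) < dist q (pt (1 / 4) (ρ / 2)) ↔
      q 1 < leftBisector ρ c b (q 0) := by
  have key : ((q 0 - (1 / 4 + c * b)) ^ 2 + (q 1 - (ρ / 2 - b)) ^ 2) -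
      ((q 0 - 1 / 4) ^ 2 + (q 1 - ρ / 2) ^ 2) = 2 * b * (q 1 - leftBisector ρ c b (q 0)) := by
    unfold leftBisector; ring
  rw [dist_lt_dist_iff_sq, barneyPoint, pt_apply_zero, pt_apply_one, pt_apply_zero, pt_apply_one,
    ← sub_neg, key, ← smul_eq_mul, smul_neg_iff_of_pos_left (by positivity), sub_neg]

theorem dist_barneyPoint_lt_right_iff (hb : 0 < b) (q : EuclideanSpace ℝ (Fin 2)) :
    dist q (barneyPoint ρ c b) < dist q (pt (3 / 4) (ρ / 2)) ↔
      q 1 < rightBisector ρ c b (q 0) := by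
  have key : ((q 0 - (1 / 4 + c * b)) ^ 2 + (q 1 - (ρ / 2 - b)) ^ 2) -
      ((q 0 - 3 / 4) ^ 2 + (q 1 - ρ / 2) ^ 2) = 2 * b * (q 1 - rightBisector ρ c b (q 0)) := by
    unfold rightBisector rightSlope leftBisector; field_simp; ring
  rw [dist_lt_dist_iff_sq, barneyPoint, pt_apply_zero, pt_apply_one, pt_apply_zero, pt_apply_one,
    ← sub_neg, key, ← smul_eq_mul, smul_neg_iff_of_pos_left (by positivity), sub_neg]

theorem leftBisector_sub_rightBisector (x : ℝ) :
    leftBisector ρ c b x - rightBisector ρ c b x = (c + rightSlope c b) * (x - 1 / 2) := by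
  unfold rightBisector leftBisector; ring

theorem rightBisector_rightEnd (hK : 0 < rightSlope c b) :
    rightBisector ρ c b (rightEnd ρ c b) = 0 := by
  unfold rightBisector rightEnd; field_simp; ring

theorem planeCoords_preimage_stolenRegion_subset (hb : 0 < b) (hc : 0 ≤ c)
    (hK : 0 < rightSlope c b) (htop : leftBisector ρ c b (1 / 2) ≤ ρ)
    (hend : 2 * leftBisector ρ c b (1 / 2) ≤ rightSlope c b) :
    planeCoords ⁻¹' stolenRegion ρ c b ⊆ {q | q ∈ board ρ ∧
      dist q (barneyPoint ρ c b) < infDist q {pt (1 / 4) (ρ / 2), pt (3 / 4) (ρ / 2)}} := by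
  intro q hq
  simp only [mem_ofPred_eq, board, mem_Icc, infDist_pair, lt_min_iff,
    dist_barneyPoint_lt_left_iff hb, dist_barneyPoint_lt_right_iff hb]
  simp only [stolenRegion, planeCoords, mem_preimage, mem_union, regionBetween, mem_ofPred_eq,
    mem_Ioo] at hq
  have hdiff := leftBisector_sub_rightBisector (ρ := ρ) (c := c) (b := b) (q 0)
  have hX : rightEnd ρ c b ≤ 1 := by
    have : leftBisector ρ c b (1 / 2) / rightSlope c b ≤ 1 / 2 := by
      rw [div_le_iff₀ hK]; linarith
    unfold rightEnd; linarith
  rcases hq with ⟨⟨hx0, hx1⟩, hy0, hy⟩ | ⟨⟨hx0, hx1⟩, hy0, hy⟩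
  · have hmono : leftBisector ρ c b (q 0) ≤ leftBisector ρ c b (1 / 2) := by
      unfold leftBisector; nlinarith
    refine ⟨⟨⟨by linarith, by linarith⟩, by linarith, by linarith⟩, hy, ?_⟩
    nlinarith
  · have hmono : rightBisector ρ c b (q 0) ≤ leftBisector ρ c b (1 / 2) := by
      unfold rightBisector; nlinarith
    refine ⟨⟨⟨by linarith, by linarith⟩, by linarith, by linarith⟩, ?_, hy⟩
    nlinarith

theorem volume_stolenRegion (hc : 0 ≤ c) (hK : 0 < rightSlope c b)
    (h0 : 0 ≤ leftBisector ρ c b 0) :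
    volume (stolenRegion ρ c b) = ENNReal.ofReal (stolenArea ρ c b) := by
  have hh : 0 ≤ leftBisector ρ c b (1 / 2) := by unfold leftBisector at *; linarith
  have hX : 1 / 2 ≤ rightEnd ρ c b := by
    have := div_nonneg hh hK.le
    unfold rightEnd; linarith
  have hr : 0 ≤ rightBisector ρ c b (1 / 2) := by simpa [rightBisector] using hh
  have hdisj : Disjoint (regionBetween (fun _ => 0) (leftBisector ρ c b) (Ioo 0 (1 / 2)))
      (regionBetween (fun _ => (0 : ℝ)) (rightBisector ρ c b) (Ioo (1 / 2) (rightEnd ρ c b))) :=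
    disjoint_left.2 fun z h₁ h₂ => by linarith [h₁.1.2, h₂.1.1]
  rw [stolenRegion, measure_union hdisj (measurableSet_regionBetween measurable_const
      (by unfold rightBisector; fun_prop) measurableSet_Ioo),
    volume_regionBetween_zero_of_affine c (ρ / 2 - c / 4 - (1 + c ^ 2) * b / 2)
      (fun x => by unfold leftBisector; ring) (by norm_num) h0 hh,
    volume_regionBetween_zero_of_affine (-rightSlope c b)
      (leftBisector ρ c b (1 / 2) + rightSlope c b / 2) (fun x => by unfold rightBisector; ring)
      hX hr (rightBisector_rightEnd hK).ge,
    rightBisector_rightEnd hK, ← ENNReal.ofReal_add (by nlinarith)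
      (by nlinarith [mul_nonneg (sub_nonneg.2 hX) hr])]
  congr 1
  unfold stolenArea rightEnd rightBisector leftBisector
  field_simp
  ring

theorem quarter_lt_stolenArea (hc : 0 ≤ c) (hc' : c ≤ 2 / 3) (hb : 0 < b)
    (hbc : 4 * b = 3 * c ^ 2 - 1) (hρ : ρ = 3 * c / 2) :
    ρ / 4 < stolenArea ρ c b := by
  set h := leftBisector ρ c b (1 / 2)
  have hcb : 2 * c * b < 1 := by nlinarith
  have key : (1 + c ^ 2) * (1 - 2 * c * b) < 4 * h ^ 2 := by
    have hexp : 4 * h ^ 2 - (1 + c ^ 2) * (1 - 2 * c * b) =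
        b * (4 - 2 * c - 2 * c ^ 3) + ((1 + c ^ 2) * b) ^ 2 := by
      simp only [h, leftBisector, hρ]; linear_combination (-1) * hbc
    nlinarith [mul_pos hb (show 0 < 4 - 2 * c - 2 * c ^ 3 by nlinarith)]
  have harea :
      stolenArea ρ c b = ρ / 4 - (1 + c ^ 2) * b / 4 + h ^ 2 * b / (1 - 2 * c * b) := by
    unfold stolenArea rightSlope
    field_simp
    ring
  suffices (1 + c ^ 2) * b / 4 < h ^ 2 * b / (1 - 2 * c * b) by linarith
  rw [div_lt_div_iff₀ four_pos (by linarith)]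
  nlinarith

theorem ofReal_quarter_lt_volume_stolen (hc : 0 ≤ c) (hc' : c ≤ 2 / 3) (hb : 0 < b)
    (hbc : 4 * b = 3 * c ^ 2 - 1) (hρ : ρ = 3 * c / 2) :
    ENNReal.ofReal (ρ / 4) < volume {q | q ∈ board ρ ∧
      dist q (barneyPoint ρ c b) < infDist q {pt (1 / 4) (ρ / 2), pt (3 / 4) (ρ / 2)}} := by
  have hb' : b ≤ 1 / 12 := by nlinarith
  have hc₀ : 1 / 2 < c := by nlinarith
  have hK : 16 / 3 ≤ rightSlope c b := by
    rw [rightSlope, le_div_iff₀ (by positivity)]; nlinarith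
  have h0 : 0 ≤ leftBisector ρ c b 0 := by unfold leftBisector; nlinarith
  have htop : leftBisector ρ c b (1 / 2) ≤ c := by unfold leftBisector; nlinarith
  calc ENNReal.ofReal (ρ / 4)
      < ENNReal.ofReal (stolenArea ρ c b) :=
        (ENNReal.ofReal_lt_ofReal_iff_of_nonneg (by linarith)).2
          (quarter_lt_stolenArea hc hc' hb hbc hρ)
    _ = volume (planeCoords ⁻¹' stolenRegion ρ c b) := by
        rw [← volume_stolenRegion hc (by linarith) h0,
          measurePreserving_planeCoords.measure_preimage
            measurableSet_stolenRegion.nullMeasurableSet]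
    _ ≤ _ := measure_mono (planeCoords_preimage_stolenRegion_subset hb hc (by linarith)
        (by linarith) (by linarith))

end BarneyPoint

/-- For aspect ratio `ρ > √3/2`, against the `1 × 2` grid
`W = {(1/4, ρ/2), (3/4, ρ/2)}`, Barney's first point can steal strictly
more than a quarter of the board. -/
theorem stmt_18 (ρ : ℝ) (hρ1 : Real.sqrt 3 / 2 < ρ) (hρ2 : ρ ≤ 1)
    (W : Set (EuclideanSpace ℝ (Fin 2)))
    (hW : W = {pt (1/4) (ρ/2), pt (3/4) (ρ/2)}) :
    ∃ p ∈ board ρ,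
      volume {q | q ∈ board ρ ∧ dist q p < infDist q W} > ENNReal.ofReal (ρ / 4) := by
  have h3 : 3 < 4 * ρ ^ 2 := by
    nlinarith [Real.sq_sqrt (show (0 : ℝ) ≤ 3 by norm_num), Real.sqrt_nonneg 3]
  have hρ0 : 0 < ρ := lt_trans (by positivity) hρ1
  have hb : 0 < (4 * ρ ^ 2 - 3) / 12 := by linarith
  refine ⟨barneyPoint ρ (2 * ρ / 3) ((4 * ρ ^ 2 - 3) / 12),
    pt_mem_board.2 ⟨⟨by positivity, by nlinarith⟩, by nlinarith, by linarith⟩, ?_⟩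
  subst hW
  exact ofReal_quarter_lt_volume_stolen (by positivity) (by linarith) hb (by ring) (by ring)
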